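/- arXiv:math/0007094 — 6 statements merged into one kernel-verified Lean document; each statement's English description precedes it below -/
import Mathlib

section
/- Let q ≥ 1 be a real number. For every u ∈ Ω and every real λ with -(q+1) ≤ λ ≤ q+1, the complex number 1 - λu + qu² does not lie in the set (-∞, 0] of non-positive real numbers. -/
/-- The interior `Ω` of the region `C`: `|u| < q^(-1/2)`, and if `u` is real
then `|u| < 1/q`. -/
def Omega (q : ℝ) : Set ℂ :=
  {u : ℂ | ‖u‖ < (Real.sqrt q)⁻¹ ∧ (u.im = 0 → |u.re| < 1 / q)}

/-! Write `u = x + iy`. The imaginary part of `1 - λu + qu²` is `y (2qx - λ)`, so it can only be a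
non-positive real if `u` is real or `λ = 2qx`. For real `u` the value is at least
`(1 - |x|)(1 - q|x|) > 0` because `|λ| ≤ q + 1`; for `λ = 2qx` its real part is `1 - q|u|² > 0`. -/

namespace Complex

theorem re_one_sub_mul_add_mul_sq (q lam : ℝ) (u : ℂ) :
    (1 - (lam : ℂ) * u + (q : ℂ) * u ^ 2).re = 1 - lam * u.re + q * (u.re ^ 2 - u.im ^ 2) := by
  simp only [sub_re, add_re, one_re, pow_two, mul_re, mul_im, ofReal_re, ofReal_im]
  ring

theorem im_one_sub_mul_add_mul_sq (q lam : ℝ) (u : ℂ) :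
    (1 - (lam : ℂ) * u + (q : ℂ) * u ^ 2).im = u.im * (2 * q * u.re - lam) := by
  simp only [sub_im, add_im, one_im, pow_two, mul_re, mul_im, ofReal_re, ofReal_im]
  ring

end Complex

theorem one_sub_mul_add_mul_sq_pos {q t lam : ℝ} (hq : 1 ≤ q) (ht : |t| < 1 / q)
    (hlam : |lam| ≤ q + 1) : 0 < 1 - lam * t + q * t ^ 2 := by
  have hq₀ : 0 < q := by linarith
  have hqt : q * |t| < 1 := by rwa [lt_div_iff₀ hq₀, mul_comm] at ht
  have ht₁ : |t| < 1 := by nlinarith [abs_nonneg t]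
  have hlamt : lam * t ≤ (q + 1) * |t| := by
    calc lam * t ≤ |lam * t| := le_abs_self _
      _ = |lam| * |t| := abs_mul lam t
      _ ≤ (q + 1) * |t| := mul_le_mul_of_nonneg_right hlam (abs_nonneg t)
  calc 0 < (1 - |t|) * (1 - q * |t|) := mul_pos (by linarith) (by linarith)
    _ = 1 - (q + 1) * |t| + q * t ^ 2 := by rw [← sq_abs t]; ring
    _ ≤ 1 - lam * t + q * t ^ 2 := by linarith

theorem mul_normSq_lt_one_of_mem_Omega {q : ℝ} (hq : 0 < q) {u : ℂ} (hu : u ∈ Omega q) :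
    q * Complex.normSq u < 1 := by
  have h : ‖u‖ ^ 2 < (Real.sqrt q)⁻¹ ^ 2 := pow_lt_pow_left₀ hu.1 (norm_nonneg u) two_ne_zero
  rw [Complex.sq_norm, inv_pow, Real.sq_sqrt hq.le] at h
  simpa [mul_inv_cancel₀ hq.ne'] using mul_lt_mul_of_pos_left h hq

/-- For `u ∈ Ω` and `λ ∈ [-(q+1), q+1]`, the number `1 - λu + qu²` does not lie
in `(-∞, 0]`, i.e. it lies in the slit plane `ℂ \ (-∞, 0]`. -/
theorem one_sub_mul_add_sq_mem_slitPlane (q : ℝ) (hq : 1 ≤ q)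
    (u : ℂ) (hu : u ∈ Omega q) (lam : ℝ)
    (hlam₁ : -(q + 1) ≤ lam) (hlam₂ : lam ≤ q + 1) :
    (1 - (lam : ℂ) * u + (q : ℂ) * u ^ 2) ∈ Complex.slitPlane := by
  rw [Complex.mem_slitPlane_iff, Complex.re_one_sub_mul_add_mul_sq,
    Complex.im_one_sub_mul_add_mul_sq]
  by_cases hreal : u.im = 0
  · left
    have hpos := one_sub_mul_add_mul_sq_pos hq (hu.2 hreal) (abs_le.mpr ⟨hlam₁, hlam₂⟩)
    simpa [hreal] using hpos
  by_cases hcrit : lam = 2 * q * u.re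
  · left
    have hnorm := mul_normSq_lt_one_of_mem_Omega (by linarith) hu
    rw [Complex.normSq_apply] at hnorm
    rw [hcrit]
    linarith
  · exact Or.inr (mul_ne_zero hreal (sub_ne_zero.mpr (Ne.symm hcrit)))
end

section
/- Let q ≥ 1 be a real number and λ a real number with |λ| ≤ q + 1. Then every complex root u of the quadratic qu² - λu + 1 lies in the set C, i.e. either |u| = q^(-1/2), or u is real with 1/q ≤ |u| ≤ 1. -/
/-! A root `u = x + iy` of the real quadratic `qu² - λu + 1` satisfies `y (2qx - λ) = 0`.
If `y ≠ 0` then `λ = 2qx`, and the real part of the equation becomes `q (x² + y²) = 1`.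
If `y = 0` then `q x² + 1 = λ x ≤ (q + 1) |x|`, i.e. `(q|x| - 1)(|x| - 1) ≤ 0`, which for
`q ≥ 1` pins `|x|` between `1/q` and `1`. -/

lemma Complex.re_im_eqs_of_quadratic_eq_zero {a b c : ℝ} {u : ℂ}
    (h : (a : ℂ) * u ^ 2 + b * u + c = 0) :
    a * (u.re ^ 2 - u.im ^ 2) + b * u.re + c = 0 ∧ u.im * (2 * a * u.re + b) = 0 := by
  have hre := congrArg Complex.re h
  have him := congrArg Complex.im h
  simp only [pow_two, Complex.add_re, Complex.add_im, Complex.mul_re, Complex.mul_im,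
    Complex.ofReal_re, Complex.ofReal_im, Complex.zero_re, Complex.zero_im] at hre him
  exact ⟨by linear_combination hre, by linear_combination him⟩

lemma mul_abs_sub_one_mul_abs_sub_one_nonpos {q lam x : ℝ} (hlam : |lam| ≤ q + 1)
    (h : q * x ^ 2 - lam * x + 1 = 0) : (q * |x| - 1) * (|x| - 1) ≤ 0 := by
  have hlx : q * |x| ^ 2 + 1 = lam * x := by rw [sq_abs]; linarith
  have : lam * x ≤ (q + 1) * |x| :=
    calc lam * x ≤ |lam| * |x| := by rw [← abs_mul]; exact le_abs_self _
      _ ≤ (q + 1) * |x| := mul_le_mul_of_nonneg_right hlam (abs_nonneg x)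
  nlinarith

lemma one_div_le_and_le_one_of_mul_sub_one_mul_sub_one_nonpos {q t : ℝ} (hq : 1 ≤ q)
    (ht : 0 ≤ t) (h : (q * t - 1) * (t - 1) ≤ 0) : 1 / q ≤ t ∧ t ≤ 1 := by
  have hq0 : 0 < q := by linarith
  have hqt : 1 ≤ q * t := by nlinarith
  refine ⟨by rw [div_le_iff₀ hq0]; linarith, ?_⟩
  by_contra! ht1
  nlinarith [mul_pos (by nlinarith : 0 < q * t - 1) (sub_pos.mpr ht1)]

lemma Complex.norm_eq_inv_sqrt_of_mul_normSq_eq_one {q : ℝ} {u : ℂ}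
    (h : q * Complex.normSq u = 1) : ‖u‖ = (Real.sqrt q)⁻¹ := by
  rw [← Real.sqrt_inv, Complex.norm_def, eq_inv_of_mul_eq_one_right h]

/-- For `q ≥ 1` and `|λ| ≤ q + 1`, every complex root of `qu² - λu + 1` lies
in the set `C`: either `|u| = q^(-1/2)`, or `u` is real with `1/q ≤ |u| ≤ 1`. -/
theorem roots_lie_on_C (q : ℝ) (hq : 1 ≤ q) (lam : ℝ) (hlam : |lam| ≤ q + 1)
    (u : ℂ) (hroot : (q : ℂ) * u ^ 2 - (lam : ℂ) * u + 1 = 0) :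
    ‖u‖ = (Real.sqrt q)⁻¹ ∨
      (u.im = 0 ∧ 1 / q ≤ |u.re| ∧ |u.re| ≤ 1) := by
  obtain ⟨hre, him⟩ :=
    Complex.re_im_eqs_of_quadratic_eq_zero (a := q) (b := -lam) (c := 1) (u := u)
      (by push_cast; linear_combination hroot)
  rcases mul_eq_zero.mp him with hy | hlam2
  · right
    rw [hy] at hre
    exact ⟨hy, one_div_le_and_le_one_of_mul_sub_one_mul_sub_one_nonpos hq (abs_nonneg _)
      (mul_abs_sub_one_mul_abs_sub_one_nonpos hlam (by linarith))⟩
  · left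
    refine Complex.norm_eq_inv_sqrt_of_mul_normSq_eq_one ?_
    rw [Complex.normSq_apply]
    linear_combination -hre + u.re * hlam2
end

section
/- Let q ≥ 1 be a natural number and let X be a finite simple (q+1)-regular graph with adjacency matrix A. Then every complex number u satisfying det(I - u·A + qu²·I) = 0 lies in the set C; consequently all zeros of the zeta polynomial Z(X,u) = (1-u²)^(-χ(X)) · det(I - u·A + qu²·I) of X lie on C. -/
/-!
If `det(I - uA + qu²I) = 0` then `u ≠ 0` and `λ = (1 + qu²)/u` is an eigenvalue of `A`. Since `A`
is symmetric, `λ` is real, and by Gershgorin `|λ| ≤ q + 1`. So `u` is a root of the real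
quadratic `1 - λu + qu²`: a non-real root has the conjugate root as partner, and Vieta gives
`|u|² = 1/q`; a real root `x` satisfies `(q|x| - 1)(|x| - 1) ≤ 0`, i.e. `1/q ≤ |x| ≤ 1`.
-/

/-- The region `C = {u : |u| = q^(-1/2)} ∪ [-1,-1/q] ∪ [1/q,1]`,
expressed as: `|u| = q^(-1/2)`, or `u` is real with `1/q ≤ |u| ≤ 1`. -/
def regionC (q : ℝ) : Set ℂ :=
  {u : ℂ | ‖u‖ = (Real.sqrt q)⁻¹ ∨
    (u.im = 0 ∧ 1 / q ≤ |u.re| ∧ |u.re| ≤ 1)}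

open Matrix Module.End ComplexConjugate

theorem SimpleGraph.norm_le_maxDegree_of_mem_spectrum {K V : Type*} [NormedField K]
    [Fintype V] [DecidableEq V] (G : SimpleGraph V) [DecidableRel G.Adj] {μ : K}
    (hμ : μ ∈ spectrum K (G.adjMatrix K)) : ‖μ‖ ≤ G.maxDegree := by
  rw [← spectrum_toLin', ← hasEigenvalue_iff_mem_spectrum] at hμ
  obtain ⟨k, hk⟩ := eigenvalue_mem_ball hμ
  have row_sum : ∑ j ∈ Finset.univ.erase k, ‖G.adjMatrix K k j‖ = G.degree k := by
    rw [Finset.sum_erase _ (by simp), ← G.card_neighborFinset_eq_degree,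
      G.neighborFinset_eq_filter, Finset.card_filter]
    push_cast
    exact Finset.sum_congr rfl fun j _ => by simp [adjMatrix_apply, apply_ite]
  rw [mem_closedBall_iff_norm, adjMatrix_apply, if_neg (G.irrefl), sub_zero, row_sum] at hk
  exact hk.trans (mod_cast G.degree_le_maxDegree k)

theorem Matrix.div_mem_spectrum_of_det_smul_one_sub_smul_eq_zero {K n : Type*} [Field K]
    [Fintype n] [DecidableEq n] (A : Matrix n n K) {a u : K} (hu : u ≠ 0)
    (h : (a • 1 - u • A).det = 0) : a / u ∈ spectrum K A := by
  have : a • 1 - u • A = u • (algebraMap K (Matrix n n K) (a / u) - A) := by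
    rw [smul_sub, Algebra.algebraMap_eq_smul_one, smul_smul, mul_div_cancel₀ _ hu]
  rw [spectrum.mem_iff, isUnit_iff_isUnit_det, isUnit_iff_ne_zero, not_not]
  rwa [this, det_smul, mul_eq_zero, or_iff_right (pow_ne_zero _ hu)] at h

theorem norm_eq_inv_sqrt_of_root_of_im_ne_zero {q l : ℝ} {u : ℂ} (hu : u.im ≠ 0)
    (h : 1 - l * u + q * u ^ 2 = 0) : ‖u‖ = (Real.sqrt q)⁻¹ := by
  have h' : 1 - l * conj u + q * conj u ^ 2 = 0 := by
    simpa using congrArg conj h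
  have hne : u - conj u ≠ 0 := by
    simp [Complex.sub_conj, Complex.ext_iff, hu]
  have hl : (l : ℂ) = q * (u + conj u) := by
    have : (u - conj u) * (q * (u + conj u) - l) = 0 := by linear_combination h - h'
    linear_combination -(mul_eq_zero.mp this).resolve_left hne
  have hnormSq : q * Complex.normSq u = 1 := by
    have : (q : ℂ) * (u * conj u) = 1 := by linear_combination -h - u * hl
    rw [Complex.mul_conj] at this
    exact_mod_cast this
  rw [Complex.norm_def, ← Real.sqrt_inv, eq_inv_of_mul_eq_one_right hnormSq]

theorem one_div_le_abs_and_abs_le_one_of_root {q l x : ℝ} (hq : 1 ≤ q) (hl : |l| ≤ q + 1)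
    (h : 1 - l * x + q * x ^ 2 = 0) : 1 / q ≤ |x| ∧ |x| ≤ 1 := by
  have key : (q * |x| - 1) * (|x| - 1) ≤ 0 := by
    have : 1 + q * x ^ 2 ≤ |l| * |x| := by
      rw [← abs_mul, show 1 + q * x ^ 2 = l * x by linarith]; exact le_abs_self _
    nlinarith [sq_abs x, abs_nonneg x]
  rw [div_le_iff₀ (by linarith)]
  constructor
  · by_contra! hlt
    nlinarith [mul_pos (sub_pos.mpr hlt) (sub_pos.mpr (by nlinarith [abs_nonneg x] : |x| < 1))]
  · by_contra! hgt
    nlinarith [mul_pos (sub_pos.mpr (by nlinarith : 1 < q * |x|)) (sub_pos.mpr hgt)]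

theorem mem_regionC_of_root {q l : ℝ} (hq : 1 ≤ q) (hl : |l| ≤ q + 1) {u : ℂ}
    (h : 1 - l * u + q * u ^ 2 = 0) : u ∈ regionC q := by
  by_cases hu : u.im = 0
  · have hx : u = u.re := Complex.ext rfl hu
    rw [hx] at h
    exact Or.inr ⟨hu, one_div_le_abs_and_abs_le_one_of_root hq hl (by exact_mod_cast h)⟩
  · exact Or.inl (norm_eq_inv_sqrt_of_root_of_im_ne_zero hu h)

/-- For a finite simple `(q+1)`-regular graph `X` with adjacency matrix `A`,
every zero of `det(I - u·A + qu²·I)` lies in `C`; consequently every zero of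
the zeta polynomial `Z(X,u) = (1-u²)^(-χ(X)) · det(I - u·A + qu²·I)` lies
on `C`. -/
theorem zeta_zeros_lie_on_C (q : ℕ) (hq : 1 ≤ q)
    {V : Type*} [Fintype V] [DecidableEq V]
    (G : SimpleGraph V) [DecidableRel G.Adj]
    (hreg : G.IsRegularOfDegree (q + 1)) :
    (∀ u : ℂ,
        ((1 : Matrix V V ℂ) - u • G.adjMatrix ℂ
          + ((q : ℂ) * u ^ 2) • (1 : Matrix V V ℂ)).det = 0 →
        u ∈ regionC q) ∧
    (∀ u : ℂ, u ^ 2 ≠ 1 →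
        (1 - u ^ 2) ^ (-((Fintype.card V : ℤ) - (G.edgeFinset.card : ℤ))) *
          ((1 : Matrix V V ℂ) - u • G.adjMatrix ℂ
            + ((q : ℂ) * u ^ 2) • (1 : Matrix V V ℂ)).det = 0 →
        u ∈ regionC q) := by
  have det_zero : ∀ u : ℂ,
      ((1 : Matrix V V ℂ) - u • G.adjMatrix ℂ
        + ((q : ℂ) * u ^ 2) • (1 : Matrix V V ℂ)).det = 0 → u ∈ regionC q := by
    intro u hdet
    have hu : u ≠ 0 := by rintro rfl; simp at hdet
    rw [show (1 : Matrix V V ℂ) - u • G.adjMatrix ℂ + ((q : ℂ) * u ^ 2) • 1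
        = (1 + q * u ^ 2) • 1 - u • G.adjMatrix ℂ by module] at hdet
    have hspec := (G.adjMatrix ℂ).div_mem_spectrum_of_det_smul_one_sub_smul_eq_zero hu hdet
    have hbound := G.norm_le_maxDegree_of_mem_spectrum hspec
    rw [(G.isHermitian_adjMatrix ℂ).spectrum_eq_image_range] at hspec
    obtain ⟨l, -, hl⟩ := hspec
    have hmax : G.maxDegree ≤ q + 1 := G.maxDegree_le_of_forall_degree_le _ fun v => (hreg v).le
    refine mem_regionC_of_root (l := l) (mod_cast hq) ?_ ?_
    · rw [← hl, RCLike.ofReal_eq_complex_ofReal, Complex.norm_real, Real.norm_eq_abs] at hbound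
      exact hbound.trans (mod_cast hmax)
    · rw [← RCLike.ofReal_eq_complex_ofReal, hl]
      push_cast
      field_simp
      ring
  refine ⟨det_zero, fun u hu2 h => det_zero u ((mul_eq_zero.mp h).resolve_left ?_)⟩
  exact zpow_ne_zero _ (sub_ne_zero.mpr (Ne.symm hu2))
end

section
/- Let q ≥ 1 be a real number and let μ be a finite Borel measure on ℝ whose support is contained in [-(q+1), q+1]. Then the function F(u) = ∫ log(1 - λu + qu²) dμ(λ), where log denotes the principal branch of the complex logarithm, is well defined and holomorphic on Ω. -/
/-!
For `u ∈ Ω` and `λ ∈ [-(q+1), q+1]` the quadratic `1 - λu + qu²` lies in the slit plane: off the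
real axis its imaginary part `Im u · (2q Re u - λ)` vanishes only at `λ = 2q Re u`, where the real
part is `1 - q|u|² > 0`, and on the real axis it is at least `(1 - |u|)(1 - q|u|) > 0`. Hence the
integrand and its `u`-derivative `(2qu - λ)/(1 - λu + qu²)` are jointly continuous on
`Ω × [-(q+1), q+1]`, so they are bounded on compact neighbourhoods and dominated convergence
allows differentiation under the integral sign.
-/

open MeasureTheory

open Filter Set Topology

section

variable {α : Type*} [TopologicalSpace α] [T2Space α] [MeasurableSpace α] [OpensMeasurableSpace α]
  {E : Type*} [NormedAddCommGroup E] {μ : Measure α} {K : Set α}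

theorem ContinuousOn.aestronglyMeasurable_of_ae_mem {f : α → E} (hf : ContinuousOn f K)
    (hK : IsCompact K) (hμ : ∀ᵐ x ∂μ, x ∈ K) : AEStronglyMeasurable f μ := by
  simpa only [Measure.restrict_eq_self_of_ae_mem hμ] using
    hf.aestronglyMeasurable_of_isCompact (μ := μ) hK hK.measurableSet

theorem ContinuousOn.integrable_of_ae_mem [IsFiniteMeasureOnCompacts μ] {f : α → E}
    (hf : ContinuousOn f K) (hK : IsCompact K) (hμ : ∀ᵐ x ∂μ, x ∈ K) : Integrable f μ := by
  simpa only [IntegrableOn, Measure.restrict_eq_self_of_ae_mem hμ] using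
    hf.integrableOn_compact (μ := μ) hK

theorem hasDerivAt_integral_of_continuousOn_deriv {𝕜 : Type*} [RCLike 𝕜] [NormedSpace ℝ E]
    [NormedSpace 𝕜 E] [IsFiniteMeasureOnCompacts μ] {F F' : 𝕜 → α → E} {U : Set 𝕜} {u₀ : 𝕜}
    (hU : U ∈ 𝓝 u₀) (hK : IsCompact K) (hμ : ∀ᵐ x ∂μ, x ∈ K)
    (hF : ∀ u ∈ U, ContinuousOn (F u) K)
    (hF' : ContinuousOn (fun p : 𝕜 × α => F' p.1 p.2) (U ×ˢ K))
    (hderiv : ∀ u ∈ U, ∀ x ∈ K, HasDerivAt (F · x) (F' u x) u) :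
    HasDerivAt (fun u => ∫ x, F u x ∂μ) (∫ x, F' u₀ x ∂μ) u₀ := by
  obtain ⟨ε, hε, hball⟩ := Metric.nhds_basis_closedBall.mem_iff.1 hU
  obtain ⟨C, hC⟩ := ((isCompact_closedBall u₀ ε).prod hK).exists_bound_of_continuousOn
    (hF'.mono (prod_mono hball subset_rfl))
  have hF'_u₀ : ContinuousOn (F' u₀) K :=
    hF'.comp (continuousOn_const.prodMk continuousOn_id) fun x hx => ⟨mem_of_mem_nhds hU, hx⟩
  refine (hasDerivAt_integral_of_dominated_loc_of_deriv_le (bound := fun _ => C)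
    (Metric.closedBall_mem_nhds u₀ hε) ?_ ?_ ?_ ?_ ?_ ?_).2
  · filter_upwards [hU] with u hu using (hF u hu).aestronglyMeasurable_of_ae_mem hK hμ
  · exact (hF u₀ (mem_of_mem_nhds hU)).integrable_of_ae_mem hK hμ
  · exact hF'_u₀.aestronglyMeasurable_of_ae_mem hK hμ
  · filter_upwards [hμ] with x hx u hu using hC (u, x) ⟨hu, hx⟩
  · exact continuousOn_const.integrable_of_ae_mem hK hμ
  · filter_upwards [hμ] with x hx u hu using hderiv u (hball hu) x hx

end

lemma isOpen_Omega (q : ℝ) : IsOpen (Omega q) := by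
  simp only [Omega, imp_iff_not_or, ofPred_and, ofPred_or]
  exact (isOpen_lt continuous_norm continuous_const).inter
    ((isOpen_ne_fun Complex.continuous_im continuous_const).union
      (isOpen_lt (by fun_prop) continuous_const))

lemma mem_slitPlane_of_mem_Omega {q lam : ℝ} (hq : 1 ≤ q) (hlam : lam ∈ Icc (-(q + 1)) (q + 1))
    {u : ℂ} (hu : u ∈ Omega q) : 1 - (lam : ℂ) * u + (q : ℂ) * u ^ 2 ∈ Complex.slitPlane := by
  obtain ⟨hnorm, hreal⟩ := hu
  have hq0 : 0 < q := by linarith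
  have hnormSq : q * (u.re ^ 2 + u.im ^ 2) < 1 := by
    have h := pow_lt_pow_left₀ hnorm (norm_nonneg u) two_ne_zero
    rwa [inv_pow, Real.sq_sqrt hq0.le, ← one_div, lt_div_iff₀ hq0, Complex.sq_norm,
      Complex.normSq_apply, mul_comm, ← pow_two, ← pow_two] at h
  have hre : (1 - (lam : ℂ) * u + (q : ℂ) * u ^ 2).re =
      1 - lam * u.re + q * (u.re ^ 2 - u.im ^ 2) := by
    simp [pow_two]
  have him : (1 - (lam : ℂ) * u + (q : ℂ) * u ^ 2).im = u.im * (2 * q * u.re - lam) := by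
    simp [pow_two]; ring
  rw [Complex.mem_slitPlane_iff, hre, him]
  rcases eq_or_ne u.im 0 with hy | hy
  · left
    have hx : q * |u.re| < 1 := (lt_div_iff₀' hq0).1 (hreal hy)
    have hlx : lam * u.re ≤ (q + 1) * |u.re| := by
      refine (le_abs_self _).trans ?_
      rw [abs_mul]
      exact mul_le_mul_of_nonneg_right (abs_le.2 hlam) (abs_nonneg _)
    have hx1 : |u.re| < 1 := by nlinarith [abs_nonneg u.re]
    rw [hy, ← sq_abs u.re]
    nlinarith [mul_pos (sub_pos.2 hx1) (sub_pos.2 hx)]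
  · by_cases hcrit : 2 * q * u.re - lam = 0
    · left
      rw [show lam = 2 * q * u.re by linarith]
      linarith
    · exact Or.inr (mul_ne_zero hy hcrit)

lemma hasDerivAt_one_sub_mul_add_mul_sq (a b u : ℂ) :
    HasDerivAt (fun u : ℂ => 1 - a * u + b * u ^ 2) (2 * b * u - a) u := by
  refine ((((hasDerivAt_id' u).const_mul a).const_sub 1).add
    ((hasDerivAt_pow 2 u).const_mul b)).congr_deriv ?_
  ring

/-- For a finite Borel measure `μ` supported in `[-(q+1), q+1]`, the function
`F(u) = ∫ log(1 - λu + qu²) dμ(λ)` is well defined (the integrand is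
integrable) and holomorphic on `Ω`. -/
theorem log_integral_holomorphic (q : ℝ) (hq : 1 ≤ q)
    (μ : Measure ℝ) [IsFiniteMeasure μ]
    (hsupp : μ (Set.Icc (-(q + 1)) (q + 1))ᶜ = 0) :
    (∀ u ∈ Omega q,
        Integrable (fun lam : ℝ =>
          Complex.log (1 - (lam : ℂ) * u + (q : ℂ) * u ^ 2)) μ) ∧
      DifferentiableOn ℂ
        (fun u : ℂ =>
          ∫ lam : ℝ, Complex.log (1 - (lam : ℂ) * u + (q : ℂ) * u ^ 2) ∂μ)
        (Omega q) := by
  have hμ : ∀ᵐ lam ∂μ, lam ∈ Icc (-(q + 1)) (q + 1) := ae_iff.2 hsupp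
  have hcont {u : ℂ} (hu : u ∈ Omega q) : ContinuousOn
      (fun lam : ℝ => Complex.log (1 - (lam : ℂ) * u + (q : ℂ) * u ^ 2))
      (Icc (-(q + 1)) (q + 1)) :=
    (by fun_prop : Continuous fun lam : ℝ => 1 - (lam : ℂ) * u + (q : ℂ) * u ^ 2).continuousOn.clog
      fun _ hlam => mem_slitPlane_of_mem_Omega hq hlam hu
  refine ⟨fun u hu => (hcont hu).integrable_of_ae_mem isCompact_Icc hμ, fun u hu => ?_⟩
  refine (hasDerivAt_integral_of_continuousOn_deriv (μ := μ)
    (isOpen_Omega q |>.mem_nhds hu) isCompact_Icc hμ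
    (F' := fun u lam => (2 * q * u - lam) / (1 - (lam : ℂ) * u + (q : ℂ) * u ^ 2))
    (fun _ => hcont) ?_ ?_).differentiableAt.differentiableWithinAt
  · exact ContinuousOn.div (by fun_prop) (by fun_prop) fun p hp =>
      Complex.slitPlane_ne_zero (mem_slitPlane_of_mem_Omega hq hp.2 hp.1)
  · exact fun u hu lam hlam => (hasDerivAt_one_sub_mul_add_mul_sq _ _ u).clog
      (mem_slitPlane_of_mem_Omega hq hlam hu)
end

section
/- Let n ≥ 3 and let A be the adjacency matrix of the cycle graph on n vertices (vertices ℤ/nℤ, with i adjacent to i ± 1). Then for every complex number u, det(I - u·A + u²·I) = (1 - uⁿ)². -/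
open Matrix Equiv

namespace CycleDet

variable (n : ℕ) [NeZero n]

/-- cyclic shift matrix -/
def S : Matrix (ZMod n) (ZMod n) ℂ := fun i j => if i - j = 1 then 1 else 0

lemma pow_addRight (k : ℕ) (x : ZMod n) :
    ((Equiv.addRight (1 : ZMod n)) ^ k) x = x + k := by
  induction k with
  | zero => simp
  | succ k ih =>
    rw [pow_succ', Equiv.Perm.mul_apply, ih, Equiv.coe_addRight]
    push_cast
    ring

lemma sign_addRight (hn : 2 ≤ n) :
    Equiv.Perm.sign (Equiv.addRight (1 : ZMod n)) = (-1) ^ (n - 1) := by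
  haveI : Fact (1 < n) := ⟨by omega⟩
  have h10 : (1 : ZMod n) ≠ 0 := one_ne_zero
  have hc : (Equiv.addRight (1 : ZMod n)).IsCycle := by
    refine ⟨0, by simpa using h10, fun y hy => ⟨(y.val : ℤ), ?_⟩⟩
    rw [zpow_natCast, pow_addRight]
    simpa using ZMod.natCast_rightInverse y
  have hs : (Equiv.addRight (1 : ZMod n)).support = Finset.univ := by
    ext x
    simp only [Equiv.Perm.mem_support, Finset.mem_univ, iff_true, Equiv.coe_addRight]
    intro h
    exact h10 (by simpa using h)
  rw [hc.sign, hs, Finset.card_univ, ZMod.card]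
  have h : n = (n - 1) + 1 := by omega
  rw [h, pow_succ]
  simp

lemma rigidity (hn : 2 ≤ n) (σ : Equiv.Perm (ZMod n))
    (h : ∀ i, σ i = i ∨ σ i = i + 1) :
    σ = 1 ∨ σ = Equiv.addRight 1 := by
  haveI : Fact (1 < n) := ⟨by omega⟩
  have h10 : (1 : ZMod n) ≠ 0 := one_ne_zero
  by_cases h0 : σ 0 = 0
  · left
    ext i
    simp only [Equiv.Perm.coe_one, id]
    by_contra hi
    have hi' : σ i = i + 1 := (h i).resolve_left hi
    have key : ∀ k : ℕ, σ (i + k) = i + k + 1 := by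
      intro k
      induction k with
      | zero => simpa using hi'
      | succ k ih =>
        have : σ (i + k + 1) = i + k + 1 + 1 := by
          rcases h (i + k + 1) with hj | hj
          · exfalso
            have := σ.injective (ih.trans hj.symm)
            exact h10 (by linear_combination -this)
          · exact hj
        push_cast
        rw [show i + (↑k + 1) = i + ↑k + 1 from by ring, this]
    have := key (-i).val
    rw [ZMod.natCast_rightInverse (-i)] at this
    simp at this
    rw [h0] at this
    exact h10 this.symm
  · right
    have h0' : σ 0 = 1 := by simpa using (h 0).resolve_left h0
    ext i
    simp only [Equiv.coe_addRight]
    by_contra hi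
    have hi' : σ i = i := (h i).resolve_right hi
    have key : ∀ k : ℕ, σ (i - k) = i - k := by
      intro k
      induction k with
      | zero => simpa using hi'
      | succ k ih =>
        have : σ (i - k - 1) = i - k - 1 := by
          rcases h (i - k - 1) with hj | hj
          · exact hj
          · exfalso
            have hj' : σ (i - ↑k - 1) = i - ↑k := by rw [hj]; ring
            have := σ.injective (hj'.trans ih.symm)
            exact h10 (by linear_combination -this)
        push_cast
        rw [show i - (↑k + 1) = i - ↑k - 1 from by ring]
        exact this
    have := key i.val
    rw [ZMod.natCast_rightInverse i] at this
    simp at this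
    rw [h0'] at this
    exact h10 this


lemma entry (u : ℂ) (a b : ZMod n) : (1 - u • S n) a b
    = (if a = b then 1 else 0) - u * (if a - b = 1 then 1 else 0) := by
  simp [S, Matrix.sub_apply, Matrix.smul_apply, Matrix.one_apply]

lemma det_one_sub (hn : 2 ≤ n) (u : ℂ) : (1 - u • S n).det = 1 - u ^ n := by
  haveI : Fact (1 < n) := ⟨by omega⟩
  have h10 : (1 : ZMod n) ≠ 0 := one_ne_zero
  rw [Matrix.det_apply]
  have hne : (1 : Equiv.Perm (ZMod n)) ≠ Equiv.addRight 1 := by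
    intro hcon
    have : (0 : ZMod n) = 0 + 1 := by
      conv_lhs => rw [show ((0 : ZMod n) = (1 : Equiv.Perm (ZMod n)) 0) from rfl, hcon]
      simp
    exact h10 (by linear_combination -this)
  have hzero : ∀ σ ∈ (Finset.univ : Finset (Equiv.Perm (ZMod n))),
      σ ∉ ({1, Equiv.addRight 1} : Finset (Equiv.Perm (ZMod n))) →
      Equiv.Perm.sign σ • ∏ i, (1 - u • S n) (σ i) i = 0 := by
    intro σ _ hσ
    simp only [Finset.mem_insert, Finset.mem_singleton] at hσ
    push_neg at hσ
    have : ¬ ∀ i, σ i = i ∨ σ i = i + 1 := by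
      intro hall
      rcases rigidity n hn σ hall with h1 | h1
      · exact hσ.1 h1
      · exact hσ.2 h1
    push_neg at this
    obtain ⟨i, hi1, hi2⟩ := this
    rw [Finset.prod_eq_zero (Finset.mem_univ i), smul_zero]
    rw [entry, if_neg hi1, if_neg (by rw [sub_eq_iff_eq_add']; exact hi2)]
    ring
  rw [← Finset.sum_subset (Finset.subset_univ ({1, Equiv.addRight 1} :
      Finset (Equiv.Perm (ZMod n)))) hzero,
    Finset.sum_pair hne]
  have hterm1 : Equiv.Perm.sign (1 : Equiv.Perm (ZMod n)) •
      ∏ i, (1 - u • S n) ((1 : Equiv.Perm (ZMod n)) i) i = 1 := by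
    simp only [Equiv.Perm.sign_one, one_smul, Equiv.Perm.coe_one, id]
    rw [Finset.prod_congr rfl (fun i _ => ?_), Finset.prod_const_one]
    rw [entry, if_pos rfl, if_neg (by simp [h10.symm])]
    ring
  have hterm2 : Equiv.Perm.sign (Equiv.addRight (1 : ZMod n)) •
      ∏ i, (1 - u • S n) ((Equiv.addRight (1 : ZMod n)) i) i = -u ^ n := by
    have hfac : ∀ i : ZMod n, (1 - u • S n) ((Equiv.addRight (1 : ZMod n)) i) i = -u := by
      intro i
      rw [Equiv.coe_addRight, entry,
        if_neg (fun hcon => h10 (by linear_combination hcon)),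
        if_pos (by ring)]
      ring
    rw [sign_addRight n hn, Finset.prod_congr rfl (fun i _ => hfac i),
      Finset.prod_const, Finset.card_univ, ZMod.card]
    have hcoe : (((-1 : ℤˣ) ^ (n - 1) : ℤˣ) : ℤ) = (-1) ^ (n - 1) := by push_cast; ring
    rw [Units.smul_def, hcoe, zsmul_eq_mul]
    push_cast
    rw [show (-u) ^ n = (-1 : ℂ) ^ n * u ^ n from by rw [neg_pow],
      ← mul_assoc, ← pow_add, show n - 1 + n = 2 * (n - 1) + 1 from by omega,
      pow_succ, pow_mul]
    simp
  rw [hterm1, hterm2]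
  ring

end CycleDet

/-- The adjacency matrix (over `ℂ`) of the cycle graph on vertices `ℤ/nℤ`,
where `i` and `j` are adjacent iff `i - j ≡ ±1 (mod n)`. -/
def cycleAdjMatrix (n : ℕ) [NeZero n] : Matrix (ZMod n) (ZMod n) ℂ :=
  fun i j => if i - j = 1 ∨ j - i = 1 then 1 else 0

/-- Ihara's rationality formula for the `n`-cycle: if `A` is the adjacency
matrix of the cycle graph on `n ≥ 3` vertices, then
`det(I - u·A + u²·I) = (1 - uⁿ)²` for all `u ∈ ℂ`. -/
theorem det_cycle_eq (n : ℕ) [NeZero n] (hn : 3 ≤ n) (u : ℂ) :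
    ((1 : Matrix (ZMod n) (ZMod n) ℂ) - u • cycleAdjMatrix n
      + (u ^ 2) • (1 : Matrix (ZMod n) (ZMod n) ℂ)).det
      = (1 - u ^ n) ^ 2 := by
  haveI : Fact (1 < n) := ⟨by omega⟩
  have h10 : (1 : ZMod n) ≠ 0 := one_ne_zero
  have h20 : (2 : ZMod n) ≠ 0 := by
    intro hcon
    have hdvd : n ∣ 2 := (ZMod.natCast_eq_zero_iff 2 n).mp (by push_cast; exact hcon)
    have := Nat.le_of_dvd (by norm_num) hdvd
    omega
  set B := CycleDet.S n with hB
  have hBBt : B * Bᵀ = 1 := by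
    ext i j
    rw [Matrix.mul_apply, Finset.sum_eq_single (i - 1)]
    · simp only [hB, CycleDet.S, Matrix.transpose_apply]
      rw [if_pos (show i - (i - 1) = 1 by ring)]
      rw [one_mul, Matrix.one_apply]
      by_cases h : i = j
      · rw [if_pos (show j - (i - 1) = 1 by linear_combination -h), if_pos h]
      · rw [if_neg (fun hc => h (by linear_combination -hc)), if_neg h]
    · intro k _ hk
      simp only [hB, CycleDet.S, Matrix.transpose_apply]
      rw [if_neg, zero_mul]
      intro hcon
      exact hk (by linear_combination -hcon)
    · intro h; exact absurd (Finset.mem_univ _) h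
  have hA : cycleAdjMatrix n = B + Bᵀ := by
    ext i j
    simp only [cycleAdjMatrix, hB, CycleDet.S, Matrix.add_apply, Matrix.transpose_apply]
    by_cases h1 : i - j = 1 <;> by_cases h2 : j - i = 1
    · exact absurd (show (2 : ZMod n) = 0 by linear_combination -h1 - h2) h20
    · rw [if_pos (Or.inl h1), if_pos h1, if_neg h2]; ring
    · rw [if_pos (Or.inr h2), if_neg h1, if_pos h2]; ring
    · rw [if_neg (by tauto), if_neg h1, if_neg h2]; ring
  have hfact : (1 : Matrix (ZMod n) (ZMod n) ℂ) - u • cycleAdjMatrix n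
      + (u ^ 2) • (1 : Matrix (ZMod n) (ZMod n) ℂ) = (1 - u • B) * (1 - u • Bᵀ) := by
    rw [hA]
    simp only [Matrix.mul_sub, Matrix.sub_mul, Matrix.one_mul, Matrix.mul_one,
      Matrix.smul_mul, Matrix.mul_smul, smul_smul, hBBt, smul_add]
    module
  rw [hfact, Matrix.det_mul,
    show (1 - u • Bᵀ) = (1 - u • B)ᵀ by
      rw [Matrix.transpose_sub, Matrix.transpose_smul, Matrix.transpose_one],
    Matrix.det_transpose, CycleDet.det_one_sub n (by omega) u, sq]
end

section
/- Let q ≥ 1 be a natural number and let X be a finite simple (q+1)-regular graph with v vertices and e edges (so e = (q+1)v/2), adjacency matrix A, and Euler characteristic χ = v - e. Define Z(u) = (1 - u²)^(-χ) · det(I - u·A + qu²·I) for complex u with u² ≠ 1. Then for every complex number u with u ≠ 0, u² ≠ 1 and q²u² ≠ 1, the functional equation Z(1/(qu)) = ((1-u²)/(q²u²-1))^χ · q^(v-2e) · u^(-2e) · Z(u) holds. -/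
/-- Functional equation for the zeta function of a finite simple
`(q+1)`-regular graph `X` with `v` vertices, `e` edges, adjacency matrix `A`
and Euler characteristic `χ = v - e`:
`Z(1/(qu)) = ((1-u²)/(q²u²-1))^χ · q^(v-2e) · u^(-2e) · Z(u)`,
where `Z(u) = (1-u²)^(-χ) · det(I - u·A + qu²·I)`. -/
theorem zeta_functional_equation (q : ℕ) (hq : 1 ≤ q)
    {V : Type*} [Fintype V] [DecidableEq V]
    (G : SimpleGraph V) [DecidableRel G.Adj]
    (hreg : G.IsRegularOfDegree (q + 1))
    (v e : ℕ) (hv : v = Fintype.card V) (he : e = G.edgeFinset.card)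
    (χ : ℤ) (hχ : χ = (v : ℤ) - (e : ℤ))
    (Z : ℂ → ℂ)
    (hZ : ∀ u : ℂ, Z u =
      (1 - u ^ 2) ^ (-χ) *
        ((1 : Matrix V V ℂ) - u • G.adjMatrix ℂ
          + ((q : ℂ) * u ^ 2) • (1 : Matrix V V ℂ)).det)
    (u : ℂ) (hu0 : u ≠ 0) (hu1 : u ^ 2 ≠ 1) (hu2 : (q : ℂ) ^ 2 * u ^ 2 ≠ 1) :
    Z (1 / ((q : ℂ) * u)) =
      ((1 - u ^ 2) / ((q : ℂ) ^ 2 * u ^ 2 - 1)) ^ χ *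
        (q : ℂ) ^ ((v : ℤ) - 2 * (e : ℤ)) * u ^ (-(2 * (e : ℤ))) * Z u := by
  have hq0 : (q : ℂ) ≠ 0 := Nat.cast_ne_zero.mpr (by omega)
  set w : ℂ := (q : ℂ) * u with hw_def
  have hw : w ≠ 0 := mul_ne_zero hq0 hu0
  have ha : (1 : ℂ) - u ^ 2 ≠ 0 := sub_ne_zero.mpr (Ne.symm hu1)
  have hb : (q : ℂ) ^ 2 * u ^ 2 - 1 ≠ 0 := sub_ne_zero.mpr hu2
  have hwsq : (q : ℂ) ^ 2 * u ^ 2 = w ^ 2 := by rw [hw_def]; ring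
  have hB : w ^ 2 - 1 ≠ 0 := by rw [← hwsq]; exact hb
  -- matrix identity
  have hM : (1 : Matrix V V ℂ) - (1 / w) • G.adjMatrix ℂ
        + ((q : ℂ) * (1 / w) ^ 2) • (1 : Matrix V V ℂ)
      = ((w * u)⁻¹ : ℂ) • ((1 : Matrix V V ℂ) - u • G.adjMatrix ℂ
        + ((q : ℂ) * u ^ 2) • (1 : Matrix V V ℂ)) := by
    ext i j
    simp only [Matrix.add_apply, Matrix.sub_apply, Matrix.smul_apply, Matrix.one_apply,
      SimpleGraph.adjMatrix_apply, smul_eq_mul]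
    split_ifs <;> field_simp <;> ring
  rw [hZ, hZ, hM, Matrix.det_smul, ← hv]
  set D : ℂ := ((1 : Matrix V V ℂ) - u • G.adjMatrix ℂ
      + ((q : ℂ) * u ^ 2) • (1 : Matrix V V ℂ)).det with hD
  have h1 : (1 : ℂ) - (1 / w) ^ 2 = (w ^ 2 - 1) / w ^ 2 := by
    field_simp
  rw [h1, hwsq]
  -- canonical form
  set C : ℂ := (w ^ 2 - 1) ^ (-χ) * w ^ (χ + χ - (v : ℤ)) * u ^ (-(v : ℤ)) with hC
  have l1 : ((w * u)⁻¹ : ℂ) ^ v = w ^ (-(v : ℤ)) * u ^ (-(v : ℤ)) := by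
    rw [← zpow_natCast ((w * u)⁻¹) v, inv_zpow, mul_zpow, mul_inv, ← zpow_neg, ← zpow_neg]
  have l2 : ((w ^ 2 - 1) / w ^ 2 : ℂ) ^ (-χ) = (w ^ 2 - 1) ^ (-χ) * w ^ (χ + χ) := by
    rw [div_zpow, zpow_neg (w ^ 2), div_eq_mul_inv, inv_inv, pow_two, mul_zpow, ← zpow_add₀ hw]
  have l3 : ((1 - u ^ 2) / (w ^ 2 - 1) : ℂ) ^ χ
      = (1 - u ^ 2) ^ χ * (w ^ 2 - 1) ^ (-χ) := by
    rw [div_zpow, div_eq_mul_inv, ← zpow_neg]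
  have l4 : ((q : ℂ)) ^ ((v : ℤ) - 2 * (e : ℤ))
      = w ^ ((v : ℤ) - 2 * (e : ℤ)) * u ^ (-((v : ℤ) - 2 * (e : ℤ))) := by
    have : (q : ℂ) = w / u := by rw [hw_def]; field_simp
    rw [this, div_zpow, div_eq_mul_inv, ← zpow_neg]
  have m1 : w ^ (χ + χ) * w ^ (-(v : ℤ)) = w ^ (χ + χ - (v : ℤ)) := by
    rw [← zpow_add₀ hw]; ring_nf
  have m2 : u ^ (-((v : ℤ) - 2 * (e : ℤ))) * u ^ (-(2 * (e : ℤ))) = u ^ (-(v : ℤ)) := by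
    rw [← zpow_add₀ hu0]; congr 1; ring
  have m3 : (1 - u ^ 2 : ℂ) ^ χ * (1 - u ^ 2) ^ (-χ) = 1 := by
    rw [← zpow_add₀ ha, add_neg_cancel, zpow_zero]
  have hexp : χ + χ - (v : ℤ) = (v : ℤ) - 2 * (e : ℤ) := by omega
  have hL : ((w ^ 2 - 1) / w ^ 2 : ℂ) ^ (-χ) * ((w * u)⁻¹ : ℂ) ^ v = C := by
    rw [l1, l2, hC]
    calc (w ^ 2 - 1) ^ (-χ) * w ^ (χ + χ) * (w ^ (-(v : ℤ)) * u ^ (-(v : ℤ)))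
        = (w ^ 2 - 1) ^ (-χ) * (w ^ (χ + χ) * w ^ (-(v : ℤ))) * u ^ (-(v : ℤ)) := by ring
      _ = _ := by rw [m1]
  have hR : ((1 - u ^ 2) / (w ^ 2 - 1) : ℂ) ^ χ * (q : ℂ) ^ ((v : ℤ) - 2 * (e : ℤ))
        * u ^ (-(2 * (e : ℤ))) * (1 - u ^ 2) ^ (-χ) = C := by
    rw [l3, l4, hC, hexp]
    calc (1 - u ^ 2) ^ χ * (w ^ 2 - 1) ^ (-χ)
          * (w ^ ((v : ℤ) - 2 * (e : ℤ)) * u ^ (-((v : ℤ) - 2 * (e : ℤ))))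
          * u ^ (-(2 * (e : ℤ))) * (1 - u ^ 2) ^ (-χ)
        = ((1 - u ^ 2) ^ χ * (1 - u ^ 2) ^ (-χ)) * (w ^ 2 - 1) ^ (-χ)
          * w ^ ((v : ℤ) - 2 * (e : ℤ))
          * (u ^ (-((v : ℤ) - 2 * (e : ℤ))) * u ^ (-(2 * (e : ℤ)))) := by ring
      _ = _ := by rw [m2, m3]; ring
  calc ((w ^ 2 - 1) / w ^ 2) ^ (-χ) * (((w * u)⁻¹ : ℂ) ^ v * D)
      = (((w ^ 2 - 1) / w ^ 2) ^ (-χ) * ((w * u)⁻¹ : ℂ) ^ v) * D := by ring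
    _ = (((1 - u ^ 2) / (w ^ 2 - 1)) ^ χ * (q : ℂ) ^ ((v : ℤ) - 2 * (e : ℤ))
          * u ^ (-(2 * (e : ℤ))) * (1 - u ^ 2) ^ (-χ)) * D := by rw [hL, hR]
    _ = _ := by ring
end
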